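/- Let k ≥ 2 and t ≥ 1 be integers and let n ≥ 4k + 2t. Let c be an edge-coloring of K_n containing no rainbow copy of kP₄ ∪ tP₂, let H be a rainbow subgraph of K_n isomorphic to (k − 1)P₄ ∪ (t + 2)P₂, with H₁ the union of its k − 1 path components on 4 vertices and H₂ the union of its t + 2 path components on 2 vertices, and let G be a rainbow subgraph of K_n whose edge set contains E(H). Then for each P₄-component P of H₁ the number of edges of G joining V(P) to V(H₂) is at most 2t + 6; consequently |[V(H₁), V(H₂)]_G| ≤ 2(k − 1)(t + 3). -/

import Mathlib

/-- The disjoint union of `k` copies of a graph `G`, on vertex set `Fin k × V`. -/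
def SimpleGraph.multiCopy (k : ℕ) {V : Type*} (G : SimpleGraph V) :
    SimpleGraph (Fin k × V) where
  Adj a b := a.1 = b.1 ∧ G.Adj a.2 b.2
  symm := by
    refine ⟨?_⟩
    intro a b h
    exact ⟨h.1.symm, h.2.symm⟩
  loopless := by
    refine ⟨?_⟩
    intro a h
    exact G.loopless.irrefl _ h.2

/-- The disjoint union of two graphs `G` and `H`, on vertex set `V ⊕ W`. -/
def SimpleGraph.disjUnion {V W : Type*} (G : SimpleGraph V) (H : SimpleGraph W) :
    SimpleGraph (V ⊕ W) where
  Adj a b :=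
    match a, b with
    | Sum.inl a, Sum.inl b => G.Adj a b
    | Sum.inr a, Sum.inr b => H.Adj a b
    | _, _ => False
  symm := by
    refine ⟨?_⟩
    rintro (a | a) (b | b) h <;> simp only at h ⊢
    · exact h.symm
    · exact h.symm
  loopless := by
    refine ⟨?_⟩
    rintro (a | a) h <;> simp only at h
    · exact G.loopless.irrefl _ h
    · exact H.loopless.irrefl _ h

/-- The linear forest `k P₄ ∪ t P₂`. -/
def kP4tP2 (k t : ℕ) : SimpleGraph ((Fin k × Fin 4) ⊕ (Fin t × Fin 2)) :=
  (SimpleGraph.multiCopy k (SimpleGraph.pathGraph 4)).disjUnion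
    (SimpleGraph.multiCopy t (SimpleGraph.pathGraph 2))

/-- The edge-coloring `c` of `K_n` admits a rainbow copy of `H`: there is an injection
of the vertices of `H` into `Fin n` such that distinct edges of `H` get distinct colors. -/
def HasRainbowCopy {V : Type*} (n : ℕ) (c : Sym2 (Fin n) → ℕ) (H : SimpleGraph V) : Prop :=
  ∃ f : V ↪ Fin n, Set.InjOn (fun e => c (Sym2.map (⇑f) e)) H.edgeSet

/-- The number of colors used by an edge-coloring `c` on the edges of `K_n`. -/
noncomputable def colorCount (n : ℕ) (c : Sym2 (Fin n) → ℕ) : ℕ :=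
  (c '' (⊤ : SimpleGraph (Fin n)).edgeSet).ncard

/-- The anti-Ramsey number `AR(n, H)`: the maximum number of colors in an edge-coloring
of `K_n` containing no rainbow copy of `H`. -/
noncomputable def AR {V : Type*} (n : ℕ) (H : SimpleGraph V) : ℕ :=
  sSup {m : ℕ | ∃ c : Sym2 (Fin n) → ℕ, colorCount n c = m ∧ ¬ HasRainbowCopy n c H}

/-- The set of edges of `G` with both endpoints in `A` (the edges of `G[A]`). -/
def edgesInside {α : Type*} (G : SimpleGraph α) (A : Set α) : Set (Sym2 α) :=
  {e ∈ G.edgeSet | ∀ v ∈ e, v ∈ A}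

/-- The set of edges of `G` with one endpoint in `A` and the other in `B`,
i.e. `[A, B]_G`. -/
def edgesBetween {α : Type*} (G : SimpleGraph α) (A B : Set α) : Set (Sym2 α) :=
  {e ∈ G.edgeSet | ∃ u v, e = s(u, v) ∧ u ∈ A ∧ v ∈ B}

/-!
Suppose a `P₄`-component `P = a₀a₁a₂a₃` of `H` sent at least `2t + 7` edges of `G` to the
`t + 2` edges of `H₂`. Averaging, two of these edges `b₀b₁` and `c₀c₁` receive nonempty sets
`X`, `Y` of edges from `P` with `|X|, |Y| ≥ 3` or `|X| + |Y| ≥ 7`. The eight vertices then carry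
two disjoint `P₄`'s: if `X` and `Y` meet different halves `{a₀, a₁}`, `{a₂, a₃}` of `P`, hang each
pair on its half; otherwise both lie in one half, say `{a₀, a₁}`, so `|X|, |Y| ≥ 3`, and
`a₃a₂a₁b_β`, `b_{1-β}a₀c_γc_{1-γ}` are paths for suitable `β`, `γ`. Replacing `P` and the two pairs
by these paths turns `H` into a copy of `kP₄ ∪ tP₂` in the rainbow graph `G`, which is excluded.
Summing over the `k - 1` components gives the second bound.
-/
open Function Finset SimpleGraph

section LinearForest

variable {V ι κ ι' κ' : Type*} (G : SimpleGraph V)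

def IsLinearForestCopy (g : (ι × Fin 4) ⊕ (κ × Fin 2) → V) : Prop :=
  Injective g ∧
    (∀ i a b, (pathGraph 4).Adj a b → G.Adj (g (.inl (i, a))) (g (.inl (i, b)))) ∧
    ∀ j, G.Adj (g (.inr (j, 0))) (g (.inr (j, 1)))

variable {G}

theorem pathGraph_two_adj_iff {b b' : Fin 2} : (pathGraph 2).Adj b b' ↔ b ≠ b' := by
  fin_cases b <;> fin_cases b' <;> simp [pathGraph_adj]

theorem isLinearForestCopy_iff_forall_adj {m t : ℕ}
    {g : (Fin m × Fin 4) ⊕ (Fin t × Fin 2) → V} :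
    IsLinearForestCopy G g ↔ Injective g ∧ ∀ z w, (kP4tP2 m t).Adj z w → G.Adj (g z) (g w) := by
  refine ⟨fun ⟨hinj, hpath, hpair⟩ => ⟨hinj, ?_⟩, fun ⟨hinj, hadj⟩ => ⟨hinj, ?_, ?_⟩⟩
  · rintro (⟨i, a⟩ | ⟨j, b⟩) (⟨i', a'⟩ | ⟨j', b'⟩) ⟨rfl, h⟩
    · exact hpath i a a' h
    · rw [pathGraph_two_adj_iff] at h
      fin_cases b <;> fin_cases b' <;>
        first | exact absurd rfl h | exact hpair j | exact (hpair j).symm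
  · exact fun i a b h => hadj (.inl (i, a)) (.inl (i, b)) ⟨rfl, h⟩
  · exact fun j => hadj (.inr (j, 0)) (.inr (j, 1)) ⟨rfl, pathGraph_two_adj_iff.2 zero_ne_one⟩

theorem IsLinearForestCopy.comp_reindex {g : (ι × Fin 4) ⊕ (κ × Fin 2) → V}
    (hg : IsLinearForestCopy G g) (e₁ : ι' ≃ ι) (e₂ : κ' ≃ κ) :
    IsLinearForestCopy G (g ∘ Sum.map (Prod.map e₁ id) (Prod.map e₂ id)) :=
  ⟨hg.1.comp ((e₁.injective.prodMap injective_id).sumMap (e₂.injective.prodMap injective_id)),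
    fun i a b h => hg.2.1 (e₁ i) a b h, fun j => hg.2.2 (e₂ j)⟩

theorem hasRainbowCopy_of_isLinearForestCopy {n m t : ℕ} {c : Sym2 (Fin n) → ℕ}
    {G : SimpleGraph (Fin n)} (hG : Set.InjOn c G.edgeSet)
    {g : (Fin m × Fin 4) ⊕ (Fin t × Fin 2) → Fin n} (hg : IsLinearForestCopy G g) :
    HasRainbowCopy n c (kP4tP2 m t) := by
  obtain ⟨hinj, hadj⟩ := isLinearForestCopy_iff_forall_adj.1 hg
  have hmap : ∀ e ∈ (kP4tP2 m t).edgeSet, e.map g ∈ G.edgeSet := by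
    rintro ⟨z, w⟩ h
    exact hadj z w h
  exact ⟨⟨g, hinj⟩, fun e he e' he' h => Sym2.map.injective hinj (hG (hmap e he) (hmap e' he') h)⟩

end LinearForest

section Exchange

variable {V ι κ : Type*} {G : SimpleGraph V}

/-- The eight vertices of the component `none` and the pairs `none`, `some none`, seen as one
path `Fin 4` and two pairs `Fin 2 × Fin 2`. -/
def localEmb : Fin 4 ⊕ Fin 2 × Fin 2 → (Option ι × Fin 4) ⊕ (Option (Option κ) × Fin 2)
  | .inl a => .inl (none, a)
  | .inr (e, b) => .inr (![none, some none] e, b)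

theorem localEmb_injective :
    Injective (localEmb : _ → (Option ι × Fin 4) ⊕ (Option (Option κ) × Fin 2)) := by
  have hpair : Injective (![none, some none] : Fin 2 → Option (Option κ)) := by
    intro e e' h
    fin_cases e <;> fin_cases e' <;> simp_all
  rintro (a | ⟨e, b⟩) (a' | ⟨e', b'⟩) h <;>
    simp only [localEmb, Sum.inl.injEq, Sum.inr.injEq, Prod.mk.injEq, reduceCtorEq] at h
  · rw [h.2]
  · rw [hpair h.1, h.2]

def exchangeIndex (R : Fin 2 × Fin 4 → Fin 4 ⊕ Fin 2 × Fin 2) :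
    ((ι ⊕ Fin 2) × Fin 4) ⊕ (κ × Fin 2) → (Option ι × Fin 4) ⊕ (Option (Option κ) × Fin 2)
  | .inl (.inl i, a) => .inl (some i, a)
  | .inl (.inr c, a) => localEmb (R (c, a))
  | .inr (j, b) => .inr (some (some j), b)

theorem exchangeIndex_injective {R : Fin 2 × Fin 4 → Fin 4 ⊕ Fin 2 × Fin 2} (hR : Injective R) :
    Injective (exchangeIndex (ι := ι) (κ := κ) R) := by
  have hne_inl : ∀ x (i : ι) a, localEmb (κ := κ) x ≠ .inl (some i, a) := by
    rintro (_ | ⟨e, _⟩) <;> [simp [localEmb]; fin_cases e <;> simp [localEmb]]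
  have hne_inr : ∀ x (j : κ) b, localEmb (ι := ι) x ≠ .inr (some (some j), b) := by
    rintro (_ | ⟨e, _⟩) <;> [simp [localEmb]; fin_cases e <;> simp [localEmb]]
  rintro (⟨i | c, a⟩ | ⟨j, b⟩) (⟨i' | c', a'⟩ | ⟨j', b'⟩) h <;>
    simp only [exchangeIndex, Sum.inl.injEq, Sum.inr.injEq, Prod.mk.injEq, Option.some.injEq,
      reduceCtorEq] at h
  · rw [h.1, h.2]
  · exact absurd h.symm (hne_inl _ _ _)
  · exact absurd h (hne_inl _ _ _)
  · obtain ⟨rfl, rfl⟩ := Prod.ext_iff.1 (hR (localEmb_injective h))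
    rfl
  · exact absurd h (hne_inr _ _ _)
  · exact absurd h.symm (hne_inr _ _ _)
  · rw [h.1, h.2]

theorem IsLinearForestCopy.exchange {g : (Option ι × Fin 4) ⊕ (Option (Option κ) × Fin 2) → V}
    (hg : IsLinearForestCopy G g) {R : Fin 2 × Fin 4 → Fin 4 ⊕ Fin 2 × Fin 2} (hR : Injective R)
    (hRadj : ∀ c a b, (pathGraph 4).Adj a b →
      G.Adj (g (localEmb (R (c, a)))) (g (localEmb (R (c, b))))) :
    IsLinearForestCopy G (g ∘ exchangeIndex R) :=
  ⟨hg.1.comp (exchangeIndex_injective hR),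
    fun | .inl i, a, b, h => hg.2.1 (some i) a b h | .inr c, a, b, h => hRadj c a b h,
    fun j => hg.2.2 (some (some j))⟩

end Exchange

section HalfCounting

variable {X : Finset (Fin 4 × Fin 2)} {u : Fin 4}

theorem card_le_four_of_forall_mem_half (hX : ∀ p ∈ X, p.1 = u ∨ p.1 = 1 - u) : #X ≤ 4 :=
  calc #X ≤ #(({u, 1 - u} : Finset (Fin 4)) ×ˢ (univ : Finset (Fin 2))) :=
        card_le_card fun p hp => by simpa using hX p hp
    _ ≤ 2 * 2 := by rw [card_product]; exact Nat.mul_le_mul card_le_two le_rfl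

theorem exists_mem_of_forall_mem_half (hX : ∀ p ∈ X, p.1 = u ∨ p.1 = 1 - u) (h3 : 3 ≤ #X) :
    ∃ γ, (u, γ) ∈ X := by
  by_contra! h
  have hsub : X ⊆ univ.image fun γ => (1 - u, γ) := fun p hp => by
    obtain ⟨a, γ⟩ := p
    rcases hX _ hp with rfl | rfl
    · exact absurd hp (h γ)
    · simp
  have := (card_le_card hsub).trans card_image_le
  rw [card_univ, Fintype.card_fin] at this
  omega

theorem exists_matching_of_forall_mem_half (hX : ∀ p ∈ X, p.1 = u ∨ p.1 = 1 - u)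
    (h3 : 3 ≤ #X) : ∃ β, (u, β) ∈ X ∧ (1 - u, 1 - β) ∈ X := by
  by_contra! h
  have hsub : X ⊆ univ.image fun β => if (u, β) ∈ X then (u, β) else (1 - u, 1 - β) :=
    fun p hp => by
      obtain ⟨a, γ⟩ := p
      rcases hX _ hp with rfl | rfl
      · exact mem_image.2 ⟨γ, mem_univ _, if_pos hp⟩
      · refine mem_image.2 ⟨1 - γ, mem_univ _, ?_⟩
        rw [if_neg fun h' => h _ h' (by rwa [sub_sub_cancel]), sub_sub_cancel]
  have := (card_le_card hsub).trans card_image_le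
  rw [card_univ, Fintype.card_fin] at this
  omega

end HalfCounting

section TwoPaths

theorem forall_adj_of_pathGraph_four {W : Type*} {Γ : SimpleGraph W} {v : Fin 4 → W}
    (h₀₁ : Γ.Adj (v 0) (v 1)) (h₁₂ : Γ.Adj (v 1) (v 2)) (h₂₃ : Γ.Adj (v 2) (v 3)) :
    ∀ a b, (pathGraph 4).Adj a b → Γ.Adj (v a) (v b) := by
  intro a b h
  fin_cases a <;> fin_cases b <;> simp [pathGraph_adj] at h ⊢ <;>
    first | assumption | exact h₀₁.symm | exact h₁₂.symm | exact h₂₃.symm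

-- In `Fin 4`, `1 - a` is the other vertex of the half `{0, 1}` or `{2, 3}` containing `a`.
def pathThroughPair (a : Fin 4) (e b : Fin 2) : Fin 4 → Fin 4 ⊕ Fin 2 × Fin 2 :=
  ![.inl (1 - a), .inl a, .inr (e, b), .inr (e, 1 - b)]

theorem injective_pathThroughPair : ∀ a a' : Fin 4, ∀ b b' : Fin 2, a.val / 2 ≠ a'.val / 2 →
    Injective fun x : Fin 2 × Fin 4 =>
      ![pathThroughPair a 0 b, pathThroughPair a' 1 b'] x.1 x.2 := by
  decide

-- For `u = 1`: the paths `a₃ a₂ a₁ b_β` and `b_{1-β} a₀ c_γ c_{1-γ}`; `u = 2` is the mirror image.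
def pathsAroundInner (u : Fin 4) (β γ : Fin 2) : Fin 2 × Fin 4 → Fin 4 ⊕ Fin 2 × Fin 2 :=
  fun x => ![![.inl (2 + u), .inl (3 - u), .inl u, .inr (0, β)],
    ![.inr (0, 1 - β), .inl (1 - u), .inr (1, γ), .inr (1, 1 - γ)]] x.1 x.2

theorem injective_pathsAroundInner :
    ∀ u : Fin 4, ∀ β γ : Fin 2, (u = 1 ∨ u = 2) → Injective (pathsAroundInner u β γ) := by
  decide

theorem exists_inner_of_same_half :
    ∀ a : Fin 4, ∃ u : Fin 4, (u = 1 ∨ u = 2) ∧ u.val / 2 = a.val / 2 := by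
  decide

theorem eq_or_eq_one_sub_of_same_half :
    ∀ a u : Fin 4, a.val / 2 = u.val / 2 → a = u ∨ a = 1 - u := by
  decide

theorem pathGraph_four_adj_one_sub (a : Fin 4) : (pathGraph 4).Adj (1 - a) a := by
  rw [pathGraph_adj]
  fin_cases a <;> decide

theorem pathGraph_four_adj_of_inner {u : Fin 4} (hu : u = 1 ∨ u = 2) :
    (pathGraph 4).Adj (2 + u) (3 - u) ∧ (pathGraph 4).Adj (3 - u) u := by
  simp only [pathGraph_adj]
  rcases hu with rfl | rfl <;> decide

variable (Γ : SimpleGraph (Fin 4 ⊕ Fin 2 × Fin 2)) [DecidableRel Γ.Adj]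

def crossEdges (e : Fin 2) : Finset (Fin 4 × Fin 2) :=
  {p | Γ.Adj (.inl p.1) (.inr (e, p.2))}

variable {Γ}

theorem mem_crossEdges {e : Fin 2} {p : Fin 4 × Fin 2} :
    p ∈ crossEdges Γ e ↔ Γ.Adj (.inl p.1) (.inr (e, p.2)) := by
  simp [crossEdges]

variable (hpath : ∀ a b, (pathGraph 4).Adj a b → Γ.Adj (.inl a) (.inl b))
  (hpair : ∀ e, Γ.Adj (.inr (e, 0)) (.inr (e, 1)))
include hpath hpair

omit hpath [DecidableRel Γ.Adj] in
theorem adj_pair_one_sub (e b : Fin 2) : Γ.Adj (.inr (e, b)) (.inr (e, 1 - b)) := by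
  fin_cases b
  exacts [hpair e, (hpair e).symm]

theorem exists_two_paths_of_crossEdges_apart {a a' : Fin 4} {b b' : Fin 2}
    (h : (a, b) ∈ crossEdges Γ 0) (h' : (a', b') ∈ crossEdges Γ 1) (ha : a.val / 2 ≠ a'.val / 2) :
    ∃ R : Fin 2 × Fin 4 → Fin 4 ⊕ Fin 2 × Fin 2,
      Injective R ∧ ∀ c a b, (pathGraph 4).Adj a b → Γ.Adj (R (c, a)) (R (c, b)) := by
  refine ⟨_, injective_pathThroughPair a a' b b' ha, fun c => ?_⟩
  have hpath_through : ∀ {a e b}, (a, b) ∈ crossEdges Γ e →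
      ∀ x y, (pathGraph 4).Adj x y → Γ.Adj (pathThroughPair a e b x) (pathThroughPair a e b y) :=
    fun h => forall_adj_of_pathGraph_four (hpath _ _ (pathGraph_four_adj_one_sub _))
      (mem_crossEdges.1 h) (adj_pair_one_sub hpair _ _)
  fin_cases c
  exacts [hpath_through h, hpath_through h']

theorem exists_two_paths_of_inner {u : Fin 4} (hu : u = 1 ∨ u = 2) {β γ : Fin 2}
    (h₁ : (u, β) ∈ crossEdges Γ 0) (h₂ : (1 - u, 1 - β) ∈ crossEdges Γ 0)
    (h₃ : (1 - u, γ) ∈ crossEdges Γ 1) :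
    ∃ R : Fin 2 × Fin 4 → Fin 4 ⊕ Fin 2 × Fin 2,
      Injective R ∧ ∀ c a b, (pathGraph 4).Adj a b → Γ.Adj (R (c, a)) (R (c, b)) := by
  refine ⟨_, injective_pathsAroundInner u β γ hu, fun c => ?_⟩
  fin_cases c
  · exact forall_adj_of_pathGraph_four (hpath _ _ (pathGraph_four_adj_of_inner hu).1)
      (hpath _ _ (pathGraph_four_adj_of_inner hu).2) (mem_crossEdges.1 h₁)
  · exact forall_adj_of_pathGraph_four (mem_crossEdges.1 h₂).symm (mem_crossEdges.1 h₃)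
      (adj_pair_one_sub hpair _ _)

theorem exists_two_paths (hne : ∀ e, (crossEdges Γ e).Nonempty)
    (hcard : (3 ≤ #(crossEdges Γ 0) ∧ 3 ≤ #(crossEdges Γ 1)) ∨
      7 ≤ #(crossEdges Γ 0) + #(crossEdges Γ 1)) :
    ∃ R : Fin 2 × Fin 4 → Fin 4 ⊕ Fin 2 × Fin 2,
      Injective R ∧ ∀ c a b, (pathGraph 4).Adj a b → Γ.Adj (R (c, a)) (R (c, b)) := by
  obtain ⟨p₀, hp₀⟩ := hne 0
  obtain ⟨q₀, hq₀⟩ := hne 1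
  by_cases hapart : ∃ p ∈ crossEdges Γ 0, ∃ q ∈ crossEdges Γ 1, p.1.val / 2 ≠ q.1.val / 2
  · obtain ⟨⟨a, b⟩, h, ⟨a', b'⟩, h', ha⟩ := hapart
    exact exists_two_paths_of_crossEdges_apart hpath hpair h h' ha
  push Not at hapart
  -- all cross edges leave the half of the path containing the inner vertex `u`
  obtain ⟨u, hu, hu_half⟩ := exists_inner_of_same_half q₀.1
  have h₀ : ∀ p ∈ crossEdges Γ 0, p.1 = u ∨ p.1 = 1 - u := fun p hp =>
    eq_or_eq_one_sub_of_same_half _ _ ((hapart p hp q₀ hq₀).trans hu_half.symm)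
  have h₁ : ∀ q ∈ crossEdges Γ 1, q.1 = u ∨ q.1 = 1 - u := fun q hq =>
    eq_or_eq_one_sub_of_same_half _ _
      ((hapart p₀ hp₀ q hq).symm.trans ((hapart p₀ hp₀ q₀ hq₀).trans hu_half.symm))
  have h3 : 3 ≤ #(crossEdges Γ 0) ∧ 3 ≤ #(crossEdges Γ 1) := by
    have := card_le_four_of_forall_mem_half h₀
    have := card_le_four_of_forall_mem_half h₁
    omega
  obtain ⟨β, hβ, hβ'⟩ := exists_matching_of_forall_mem_half h₀ h3.1
  obtain ⟨γ, hγ⟩ := exists_mem_of_forall_mem_half (u := 1 - u)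
    (fun q hq => by rw [sub_sub_cancel]; exact (h₁ q hq).symm) h3.2
  exact exists_two_paths_of_inner hpath hpair hu hβ hβ' hγ

end TwoPaths

theorem exists_pair_of_sum_ge {κ : Type*} [Fintype κ] (s : κ → ℕ) (hκ : 3 ≤ Fintype.card κ)
    (h8 : ∀ j, s j ≤ 8) (hsum : 2 * Fintype.card κ + 3 ≤ ∑ j, s j) :
    ∃ j₁ j₂, j₁ ≠ j₂ ∧ 1 ≤ s j₁ ∧ 1 ≤ s j₂ ∧ ((3 ≤ s j₁ ∧ 3 ≤ s j₂) ∨ 7 ≤ s j₁ + s j₂) := by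
  classical
  by_contra! h
  have : Nonempty κ := Fintype.card_pos_iff.1 (by omega)
  obtain ⟨j₀, hj₀⟩ := Finite.exists_max s
  -- no `j ≠ j₀` can form a good pair with the maximal `j₀`
  have hrest : ∀ j ∈ univ.erase j₀, s j ≤ min 2 (6 - s j₀) := fun j hj => by
    have := h j₀ j (ne_of_mem_erase hj).symm
    have := hj₀ j
    omega
  have hbound : ∑ j ∈ univ.erase j₀, s j ≤ (Fintype.card κ - 1) * min 2 (6 - s j₀) :=
    calc _ ≤ #(univ.erase j₀) • min 2 (6 - s j₀) := sum_le_card_nsmul _ _ _ hrest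
      _ = _ := by rw [card_erase_of_mem (mem_univ _), card_univ, smul_eq_mul]
  rw [← add_sum_erase univ s (mem_univ j₀)] at hsum
  have := h8 j₀
  rcases (show s j₀ ≤ 4 ∨ s j₀ = 5 ∨ 6 ≤ s j₀ by omega) with h | h | h
  · rw [min_eq_left (by omega)] at hbound
    omega
  · rw [h, show min 2 (6 - 5) = 1 from rfl, mul_one] at hbound
    omega
  · rw [min_eq_right (by omega), Nat.sub_eq_zero_of_le h, mul_zero] at hbound
    omega

section EdgeCounting

variable {V α β ι : Type*} {G : SimpleGraph V}

theorem ncard_edgesBetween_range_le [Fintype α] [Fintype β] [DecidableRel G.Adj]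
    (φ : α → V) (ψ : β → V) :
    (edgesBetween G (Set.range φ) (Set.range ψ)).ncard ≤ #{p : α × β | G.Adj (φ p.1) (ψ p.2)} :=
  calc _ ≤ ((fun p : α × β => s(φ p.1, ψ p.2)) '' {p | G.Adj (φ p.1) (ψ p.2)}).ncard := by
        refine Set.ncard_le_ncard ?_ ((Set.toFinite _).image _)
        rintro _ ⟨he, _, _, rfl, ⟨a, rfl⟩, ⟨b, rfl⟩⟩
        exact ⟨(a, b), he, rfl⟩
    _ ≤ {p : α × β | G.Adj (φ p.1) (ψ p.2)}.ncard := Set.ncard_image_le (Set.toFinite _)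
    _ = _ := by rw [← Set.ncard_coe_finset, coe_filter]; simp only [mem_univ, true_and]

theorem ncard_edgesBetween_iUnion_le [Finite V] [Fintype ι] (A : ι → Set V) (B : Set V) :
    (edgesBetween G (⋃ i, A i) B).ncard ≤ ∑ i, (edgesBetween G (A i) B).ncard := by
  refine le_trans (Set.ncard_le_ncard ?_ (Set.toFinite _)) (Set.ncard_iUnion_le_of_fintype _)
  rintro _ ⟨he, u, v, rfl, hu, hv⟩
  obtain ⟨i, hi⟩ := Set.mem_iUnion.1 hu
  exact Set.mem_iUnion.2 ⟨i, he, u, v, rfl, hi, hv⟩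

end EdgeCounting

def componentCrossEdges {V ι κ : Type*} (G : SimpleGraph V) [DecidableRel G.Adj]
    (f : (ι × Fin 4) ⊕ (κ × Fin 2) → V) (i : ι) (j : κ) : Finset (Fin 4 × Fin 2) :=
  {p | G.Adj (f (.inl (i, p.1))) (f (.inr (j, p.2)))}

theorem mem_componentCrossEdges {V ι κ : Type*} {G : SimpleGraph V} [DecidableRel G.Adj]
    {f : (ι × Fin 4) ⊕ (κ × Fin 2) → V} {i : ι} {j : κ} {p : Fin 4 × Fin 2} :
    p ∈ componentCrossEdges G f i j ↔ G.Adj (f (.inl (i, p.1))) (f (.inr (j, p.2))) := by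
  simp [componentCrossEdges]

theorem ncard_edgesBetween_le_sum_card_componentCrossEdges {V ι κ : Type*} [Fintype κ]
    {G : SimpleGraph V} [DecidableRel G.Adj] (f : (ι × Fin 4) ⊕ (κ × Fin 2) → V) (i : ι) :
    (edgesBetween G (Set.range fun a => f (.inl (i, a))) (Set.range fun p => f (.inr p))).ncard ≤
      ∑ j, #(componentCrossEdges G f i j) :=
  calc _ ≤ #{p : Fin 4 × (κ × Fin 2) | G.Adj (f (.inl (i, p.1))) (f (.inr p.2))} :=
        ncard_edgesBetween_range_le _ _
    _ = _ := by
      simp only [componentCrossEdges, card_filter, Fintype.sum_prod_type]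
      exact sum_comm

theorem hasRainbowCopy_of_componentCrossEdges {K t n : ℕ} {c : Sym2 (Fin n) → ℕ}
    {G : SimpleGraph (Fin n)} [DecidableRel G.Adj] (hG : Set.InjOn c G.edgeSet)
    {f : (Fin (K + 1) × Fin 4) ⊕ (Fin (t + 2) × Fin 2) → Fin n} (hf : IsLinearForestCopy G f)
    (i : Fin (K + 1)) (j₁ : Fin (t + 2)) (j₂ : Fin (t + 1))
    (h₁ : (componentCrossEdges G f i j₁).Nonempty)
    (h₂ : (componentCrossEdges G f i (j₁.succAbove j₂)).Nonempty)
    (hcard : (3 ≤ #(componentCrossEdges G f i j₁) ∧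
        3 ≤ #(componentCrossEdges G f i (j₁.succAbove j₂))) ∨
      7 ≤ #(componentCrossEdges G f i j₁) + #(componentCrossEdges G f i (j₁.succAbove j₂))) :
    HasRainbowCopy n c (kP4tP2 (K + 2) t) := by
  -- relabel so that the component `i` and the pairs `j₁`, `j₁.succAbove j₂` become
  -- `none`, `none`, `some none`
  let g := f ∘ Sum.map (Prod.map (finSuccEquiv' i).symm id)
    (Prod.map ((Equiv.optionCongr (finSuccEquiv' j₂).symm).trans (finSuccEquiv' j₁).symm) id)
  have hg : IsLinearForestCopy G g := hf.comp_reindex _ _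
  let Γ := G.comap (g ∘ localEmb)
  have hX₁ : crossEdges Γ 0 = componentCrossEdges G f i j₁ := by
    ext p
    rw [mem_crossEdges, mem_componentCrossEdges]
    simp [Γ, g, localEmb, -Equiv.optionCongr_symm]
  have hX₂ : crossEdges Γ 1 = componentCrossEdges G f i (j₁.succAbove j₂) := by
    ext p
    rw [mem_crossEdges, mem_componentCrossEdges]
    simp [Γ, g, localEmb, -Equiv.optionCongr_symm]
  obtain ⟨R, hR, hRadj⟩ := exists_two_paths (Γ := Γ) (fun a b h => hg.2.1 none a b h)
    (fun e => by fin_cases e; exacts [hg.2.2 none, hg.2.2 (some none)])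
    (fun e => by fin_cases e; exacts [hX₁ ▸ h₁, hX₂ ▸ h₂])
    (by rwa [hX₁, hX₂])
  exact hasRainbowCopy_of_isLinearForestCopy hG
    ((hg.exchange hR hRadj).comp_reindex finSumFinEquiv.symm (Equiv.refl _))

theorem ncard_edgesBetween_component_le {K t n : ℕ} (ht : 1 ≤ t) {c : Sym2 (Fin n) → ℕ}
    (hno : ¬ HasRainbowCopy n c (kP4tP2 (K + 2) t)) {G : SimpleGraph (Fin n)}
    (hG : Set.InjOn c G.edgeSet) {f : (Fin (K + 1) × Fin 4) ⊕ (Fin (t + 2) × Fin 2) → Fin n}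
    (hf : IsLinearForestCopy G f) (i : Fin (K + 1)) :
    (edgesBetween G (Set.range fun a => f (.inl (i, a))) (Set.range fun p => f (.inr p))).ncard ≤
      2 * t + 6 := by
  classical
  by_contra! hlt
  have hsum := ncard_edgesBetween_le_sum_card_componentCrossEdges (G := G) f i
  obtain ⟨j₁, j₂, hj, h₁, h₂, hcard⟩ :=
    exists_pair_of_sum_ge (fun j => #(componentCrossEdges G f i j))
      (by rw [Fintype.card_fin]; omega) (fun _ => card_le_univ _)
      (by rw [Fintype.card_fin]; omega)
  obtain ⟨j₂, rfl⟩ := Fin.exists_succAbove_eq hj.symm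
  exact hno (hasRainbowCopy_of_componentCrossEdges hG hf i j₁ j₂
    (card_pos.1 h₁) (card_pos.1 h₂) hcard)

theorem stmt_15_general (k t n : ℕ) (ht : 1 ≤ t)
    (c : Sym2 (Fin n) → ℕ)
    (hno : ¬ HasRainbowCopy n c (kP4tP2 k t))
    (f : ((Fin (k - 1) × Fin 4) ⊕ (Fin (t + 2) × Fin 2)) ↪ Fin n)
    (G : SimpleGraph (Fin n))
    (hG : Set.InjOn c G.edgeSet)
    (hHG : ∀ e ∈ (kP4tP2 (k - 1) (t + 2)).edgeSet, Sym2.map (⇑f) e ∈ G.edgeSet) :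
    (∀ i : Fin (k - 1),
      (edgesBetween G (Set.range fun a : Fin 4 => f (Sum.inl (i, a)))
        (Set.range fun p : Fin (t + 2) × Fin 2 => f (Sum.inr p))).ncard ≤ 2 * t + 6) ∧
    (edgesBetween G (Set.range fun p : Fin (k - 1) × Fin 4 => f (Sum.inl p))
      (Set.range fun p : Fin (t + 2) × Fin 2 => f (Sum.inr p))).ncard ≤
        2 * (k - 1) * (t + 3) := by
  have hf : IsLinearForestCopy G f :=
    isLinearForestCopy_iff_forall_adj.2 ⟨f.injective, fun z w h => hHG s(z, w) h⟩
  have hcomponent : ∀ i : Fin (k - 1),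
      (edgesBetween G (Set.range fun a => f (.inl (i, a))) (Set.range fun p => f (.inr p))).ncard ≤
        2 * t + 6 := by
    intro i
    obtain ⟨K, rfl⟩ : ∃ K, k = K + 2 := ⟨k - 2, by have := i.pos; omega⟩
    exact ncard_edgesBetween_component_le ht hno hG hf i
  refine ⟨hcomponent, ?_⟩
  have hrange : (Set.range fun p : Fin (k - 1) × Fin 4 => f (.inl p)) =
      ⋃ i, Set.range fun a => f (.inl (i, a)) := by
    ext
    simp
  calc _ ≤ ∑ i : Fin (k - 1), (edgesBetween G (Set.range fun a => f (.inl (i, a)))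
          (Set.range fun p => f (.inr p))).ncard := hrange ▸ ncard_edgesBetween_iUnion_le _ _
    _ ≤ ∑ _i : Fin (k - 1), (2 * t + 6) := sum_le_sum fun i _ => hcomponent i
    _ = 2 * (k - 1) * (t + 3) := by
      rw [sum_const, card_univ, Fintype.card_fin, smul_eq_mul]
      ring

/-- Let `k ≥ 2`, `t ≥ 1`, `n ≥ 4k + 2t`, let `c` be an edge-coloring of
`K_n` with no rainbow copy of `kP₄ ∪ tP₂`, let `f` be a rainbow copy of
`(k - 1)P₄ ∪ (t + 2)P₂` in `K_n` (with `H₁` its `P₄`-part and `H₂` its `P₂`-part), and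
let `G` be a rainbow subgraph of `K_n` containing the edges of that copy. Then each
`P₄`-component of `H₁` sends at most `2t + 6` edges of `G` to `V(H₂)`, and consequently
`|[V(H₁), V(H₂)]_G| ≤ 2(k - 1)(t + 3)`. -/
theorem stmt_15 (k t n : ℕ) (hk : 2 ≤ k) (ht : 1 ≤ t) (hn : 4 * k + 2 * t ≤ n)
    (c : Sym2 (Fin n) → ℕ)
    (hno : ¬ HasRainbowCopy n c (kP4tP2 k t))
    (f : ((Fin (k - 1) × Fin 4) ⊕ (Fin (t + 2) × Fin 2)) ↪ Fin n)
    (hH : Set.InjOn (fun e => c (Sym2.map (⇑f) e)) (kP4tP2 (k - 1) (t + 2)).edgeSet)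
    (G : SimpleGraph (Fin n))
    (hG : Set.InjOn c G.edgeSet)
    (hHG : ∀ e ∈ (kP4tP2 (k - 1) (t + 2)).edgeSet, Sym2.map (⇑f) e ∈ G.edgeSet) :
    (∀ i : Fin (k - 1),
      (edgesBetween G (Set.range fun a : Fin 4 => f (Sum.inl (i, a)))
        (Set.range fun p : Fin (t + 2) × Fin 2 => f (Sum.inr p))).ncard ≤ 2 * t + 6) ∧
    (edgesBetween G (Set.range fun p : Fin (k - 1) × Fin 4 => f (Sum.inl p))
      (Set.range fun p : Fin (t + 2) × Fin 2 => f (Sum.inr p))).ncard ≤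
        2 * (k - 1) * (t + 3) :=
  stmt_15_general k t n ht c hno f G hG hHG
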